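/- arXiv:1702.07251 — 4 statements merged into one kernel-verified Lean document; each statement's English description precedes it below -/
import Mathlib

section
/- Let 𝐌=(M_1,…,M_k) be a positively irreducible tuple of nonnegative d×d matrices. Then 𝐌 has a uniform Lyapunov exponent modulo 0 if and only if there exists C>0 such that for every n≥1 and every word J=j_1⋯j_n with M_J≠0, one has C⁻¹·r(𝐌)^n ≤ ‖M_J‖ ≤ C·r(𝐌)^n. -/
open Filter Real MeasureTheory

/-- The matrix norm `‖A‖ = ∑_{i,j} |A i j|`. -/
noncomputable def mnorm {d : ℕ} (A : Matrix (Fin d) (Fin d) ℝ) : ℝ :=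
  ∑ i, ∑ j, |A i j|

/-- The product `M_{j₁} ⋯ M_{jₙ}` along a word `w = j₁⋯jₙ`. -/
noncomputable def wordProd {d k : ℕ} (M : Fin k → Matrix (Fin d) (Fin d) ℝ)
    (w : List (Fin k)) : Matrix (Fin d) (Fin d) ℝ :=
  (w.map M).prod

/-- `𝐌` has a uniform Lyapunov exponent modulo 0. -/
def HasULE {d k : ℕ} (M : Fin k → Matrix (Fin d) (Fin d) ℝ) : Prop :=
  ∃ C : ℝ, 0 < C ∧ ∃ lam : ℝ, ∀ w : List (Fin k), w ≠ [] →
    wordProd M w = 0 ∨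
      (C⁻¹ * Real.exp (lam * w.length) ≤ mnorm (wordProd M w) ∧
        mnorm (wordProd M w) ≤ C * Real.exp (lam * w.length))

/-- `𝐌` is irreducible: no nonzero proper subspace is invariant under all `M i`. -/
def MatIrred {d k : ℕ} (M : Fin k → Matrix (Fin d) (Fin d) ℝ) : Prop :=
  ∀ V : Submodule ℝ (Fin d → ℝ),
    (∀ i, ∀ v ∈ V, (M i).mulVec v ∈ V) → V = ⊥ ∨ V = ⊤

/-- `𝐌` is positively irreducible. -/
def PosIrred {d k : ℕ} (M : Fin k → Matrix (Fin d) (Fin d) ℝ) : Prop :=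
  (∀ i a b, 0 ≤ M i a b) ∧
    ∃ ℓ : ℕ, 1 ≤ ℓ ∧ ∀ a b, 0 < (∑ j ∈ Finset.Icc 1 ℓ, (∑ i, M i) ^ j) a b

/-- A single nonnegative matrix is positively irreducible:
some partial sum of its powers is entrywise positive. -/
def PosIrredMat {n : ℕ} (A : Matrix (Fin n) (Fin n) ℝ) : Prop :=
  ∃ ℓ : ℕ, 1 ≤ ℓ ∧ ∀ a b, 0 < (∑ j ∈ Finset.Icc 1 ℓ, A ^ j) a b

/-!
Since all matrices are nonnegative, `‖(M₁ + ⋯ + Mₖ)ⁿ‖` is the sum of `‖M_J‖` over the nonzero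
words `J` of length `n`, and there are `e^{n h(𝐌) + o(n)}` of them. If every nonzero `‖M_J‖` is
comparable to `e^{λn}`, taking `n`-th roots gives `ρ = e^{h(𝐌)} e^λ`, i.e. `e^λ = r(𝐌)`.
Positive irreducibility makes `M₁ + ⋯ + Mₖ` non-nilpotent (some power has a positive diagonal
entry), so the count of nonzero words never vanishes. Conversely, bounds by `r(𝐌)ⁿ` are a uniform
exponent `λ = log r(𝐌)`; here `r(𝐌) > 0` because some letter carries a nonzero matrix as soon as
some word does.
-/

open Topology

section Nonneg

variable {d : ℕ}

def nonnegMatrices (d : ℕ) : Subsemiring (Matrix (Fin d) (Fin d) ℝ) where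
  carrier := {A | ∀ a b, 0 ≤ A a b}
  mul_mem' hA hB a b := by
    rw [Matrix.mul_apply]
    exact Finset.sum_nonneg fun c _ => mul_nonneg (hA a c) (hB c b)
  one_mem' a b := by rw [Matrix.one_apply]; split_ifs <;> norm_num
  add_mem' hA hB a b := add_nonneg (hA a b) (hB a b)
  zero_mem' _ _ := le_rfl

lemma mnorm_nonneg (A : Matrix (Fin d) (Fin d) ℝ) : 0 ≤ mnorm A := by
  unfold mnorm; positivity

lemma mnorm_pos {A : Matrix (Fin d) (Fin d) ℝ} (hA : A ≠ 0) : 0 < mnorm A := by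
  refine (mnorm_nonneg A).lt_of_ne' fun h => hA ?_
  ext a b
  simp only [mnorm] at h
  rw [Fintype.sum_eq_zero_iff_of_nonneg fun _ => by positivity] at h
  have h := congrFun h a
  rw [Pi.zero_apply, Fintype.sum_eq_zero_iff_of_nonneg fun _ => by positivity] at h
  simpa using congrFun h b

lemma mnorm_sum_of_mem_nonnegMatrices {ι : Type*} (s : Finset ι)
    (B : ι → Matrix (Fin d) (Fin d) ℝ) (hB : ∀ i ∈ s, B i ∈ nonnegMatrices d) :
    mnorm (∑ i ∈ s, B i) = ∑ i ∈ s, mnorm (B i) := by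
  have habs : ∀ a b, |∑ i ∈ s, B i a b| = ∑ i ∈ s, |B i a b| := fun a b => by
    rw [abs_of_nonneg (Finset.sum_nonneg fun i hi => hB i hi a b),
      Finset.sum_congr rfl fun i hi => abs_of_nonneg (hB i hi a b)]
  simp only [mnorm, Matrix.sum_apply, habs]
  exact (Finset.sum_congr rfl fun _ _ => Finset.sum_comm).trans Finset.sum_comm

lemma apply_self_pow_le_pow_apply_self {B : Matrix (Fin d) (Fin d) ℝ}
    (hB : B ∈ nonnegMatrices d) (a : Fin d) (t : ℕ) : B a a ^ t ≤ (B ^ t) a a := by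
  induction t with
  | zero => simp
  | succ t ih =>
    rw [pow_succ, pow_succ, Matrix.mul_apply]
    calc B a a ^ t * B a a ≤ (B ^ t) a a * B a a := by gcongr; exact hB a a
      _ ≤ ∑ c, (B ^ t) a c * B c a :=
        Finset.single_le_sum (f := fun c => (B ^ t) a c * B c a)
          (fun c _ => mul_nonneg (pow_mem hB t a c) (hB c a)) (Finset.mem_univ a)

lemma PosIrredMat.pow_ne_zero [NeZero d] {A : Matrix (Fin d) (Fin d) ℝ}
    (hA : A ∈ nonnegMatrices d) (hirr : PosIrredMat A) (m : ℕ) : A ^ m ≠ 0 := by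
  obtain ⟨ℓ, -, hpos⟩ := hirr
  obtain ⟨j, hj, hdiag⟩ : ∃ j ∈ Finset.Icc 1 ℓ, (0 : ℝ) < (A ^ j) 0 0 :=
    Finset.exists_lt_of_sum_lt (f := 0) (by simpa [Matrix.sum_apply] using hpos 0 0)
  intro hm
  have hzero : (A ^ j) ^ (m + 1) = 0 := by
    rw [← pow_mul]
    exact pow_eq_zero_of_le (by nlinarith [(Finset.mem_Icc.1 hj).1]) hm
  have := (pow_pos hdiag (m + 1)).trans_le
    (apply_self_pow_le_pow_apply_self (pow_mem hA j) 0 (m + 1))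
  simp [hzero] at this

end Nonneg

section Words

variable {d k : ℕ} (M : Fin k → Matrix (Fin d) (Fin d) ℝ)

lemma wordProd_cons (i : Fin k) (w : List (Fin k)) :
    wordProd M (i :: w) = M i * wordProd M w := by
  simp [wordProd]

lemma wordProd_singleton (i : Fin k) : wordProd M [i] = M i := by
  simp [wordProd]

lemma wordProd_mem_nonnegMatrices (hM : ∀ i, M i ∈ nonnegMatrices d) (w : List (Fin k)) :
    wordProd M w ∈ nonnegMatrices d :=
  list_prod_mem fun _ hA => by
    obtain ⟨i, -, rfl⟩ := List.mem_map.1 hA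
    exact hM i

lemma sum_pow_eq_sum_wordProd (n : ℕ) :
    (∑ i, M i) ^ n = ∑ f : Fin n → Fin k, wordProd M (List.ofFn f) := by
  induction n with
  | zero => simp [wordProd]
  | succ n ih =>
    rw [pow_succ', ih, ← (Fin.consEquiv fun _ => Fin k).sum_comp, Fintype.sum_prod_type,
      Finset.sum_mul_sum]
    refine Finset.sum_congr rfl fun i _ => Finset.sum_congr rfl fun f _ => ?_
    simp [Fin.consEquiv, List.ofFn_succ, wordProd_cons]

noncomputable def nonzeroWords (n : ℕ) : Finset (Fin n → Fin k) :=
  {f | wordProd M (List.ofFn f) ≠ 0}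

lemma ncard_setOf_wordProd_ne_zero (n : ℕ) :
    Set.ncard {f : Fin n → Fin k | wordProd M (List.ofFn f) ≠ 0} = (nonzeroWords M n).card := by
  rw [← Set.ncard_coe_finset, nonzeroWords, Finset.coe_filter]
  simp

lemma mnorm_sum_pow_eq_sum_nonzeroWords (hM : ∀ i, M i ∈ nonnegMatrices d) (n : ℕ) :
    mnorm ((∑ i, M i) ^ n) = ∑ f ∈ nonzeroWords M n, mnorm (wordProd M (List.ofFn f)) := by
  rw [sum_pow_eq_sum_wordProd, mnorm_sum_of_mem_nonnegMatrices _ _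
    fun _ _ => wordProd_mem_nonnegMatrices M hM _, nonzeroWords]
  refine (Finset.sum_filter_of_ne ?_).symm
  intro f _ hf h0
  simp [h0, mnorm] at hf

lemma nonzeroWords_nonempty {n : ℕ} (h : (∑ i, M i) ^ n ≠ 0) : (nonzeroWords M n).Nonempty := by
  rw [sum_pow_eq_sum_wordProd] at h
  obtain ⟨f, -, hf⟩ := Finset.exists_ne_zero_of_sum_ne_zero h
  exact ⟨f, by simpa [nonzeroWords] using hf⟩

end Words

section Limits

lemma tendsto_rpow_inv_natCast_atTop {c : ℝ} (hc : 0 < c) :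
    Tendsto (fun n : ℕ => c ^ (n : ℝ)⁻¹) atTop (𝓝 1) := by
  simpa using tendsto_const_nhds.rpow tendsto_inv_atTop_nhds_zero_nat (Or.inl hc.ne')

lemma tendsto_rpow_inv_of_tendsto_inv_mul_log {b : ℕ → ℝ} {h : ℝ} (hb : ∀ n, 0 < b n)
    (hlog : Tendsto (fun n : ℕ => (n : ℝ)⁻¹ * Real.log (b n)) atTop (𝓝 h)) :
    Tendsto (fun n : ℕ => b n ^ (n : ℝ)⁻¹) atTop (𝓝 (Real.exp h)) := by
  refine ((Real.continuous_exp.tendsto h).comp hlog).congr fun n => ?_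
  rw [Function.comp_apply, Real.rpow_def_of_pos (hb n), mul_comm]

lemma eq_mul_of_le_mul_pow {a b : ℕ → ℝ} {C x α β : ℝ} (hC : 0 < C) (hx : 0 < x)
    (hb : ∀ n, 0 ≤ b n) (hlow : ∀ᶠ n in atTop, C⁻¹ * b n * x ^ n ≤ a n)
    (hup : ∀ᶠ n in atTop, a n ≤ C * b n * x ^ n)
    (ha : Tendsto (fun n : ℕ => a n ^ (n : ℝ)⁻¹) atTop (𝓝 α))
    (hβ : Tendsto (fun n : ℕ => b n ^ (n : ℝ)⁻¹) atTop (𝓝 β)) : α = β * x := by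
  have hnonneg : ∀ c, 0 < c → ∀ n, 0 ≤ c * b n * x ^ n := fun c hc n =>
    mul_nonneg (mul_nonneg hc.le (hb n)) (pow_pos hx n).le
  have hroot : ∀ c, 0 < c →
      Tendsto (fun n : ℕ => (c * b n * x ^ n) ^ (n : ℝ)⁻¹) atTop (𝓝 (β * x)) := by
    intro c hc
    have := ((tendsto_rpow_inv_natCast_atTop hc).mul hβ).mul_const x
    rw [one_mul] at this
    refine this.congr' ?_
    filter_upwards [eventually_ne_atTop 0] with n hn
    rw [Real.mul_rpow (mul_nonneg hc.le (hb n)) (by positivity), Real.mul_rpow hc.le (hb n),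
      Real.pow_rpow_inv_natCast hx.le hn]
  refine tendsto_nhds_unique ha (tendsto_of_tendsto_of_tendsto_of_le_of_le'
    (hroot _ (inv_pos.2 hC)) (hroot C hC) ?_ ?_)
  · filter_upwards [hlow] with n hn
    exact Real.rpow_le_rpow (hnonneg _ (inv_pos.2 hC) n) hn (by positivity)
  · filter_upwards [hlow, hup] with n hn hn'
    exact Real.rpow_le_rpow ((hnonneg _ (inv_pos.2 hC) n).trans hn) hn' (by positivity)

end Limits

section Growth

variable {d k : ℕ} {M : Fin k → Matrix (Fin d) (Fin d) ℝ}

def HasUniformGrowth (M : Fin k → Matrix (Fin d) (Fin d) ℝ) (C x : ℝ) : Prop :=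
  ∀ w : List (Fin k), w ≠ [] → wordProd M w ≠ 0 →
    C⁻¹ * x ^ w.length ≤ mnorm (wordProd M w) ∧ mnorm (wordProd M w) ≤ C * x ^ w.length

lemma hasULE_iff : HasULE M ↔ ∃ C, 0 < C ∧ ∃ lam, HasUniformGrowth M C (Real.exp lam) := by
  simp only [HasULE, HasUniformGrowth, mul_comm _ (List.length _ : ℝ), Real.exp_nat_mul,
    or_iff_not_imp_left]

lemma HasUniformGrowth.pos {C x : ℝ} (h : HasUniformGrowth M C x) (hC : 0 < C)
    {w : List (Fin k)} (hw : w ≠ []) (hne : wordProd M w ≠ 0) : 0 < x := by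
  obtain ⟨i, w', rfl⟩ := List.exists_cons_of_ne_nil hw
  have hi : M i ≠ 0 := fun h0 => hne (by rw [wordProd_cons, h0, zero_mul])
  have hle := (h [i] (List.cons_ne_nil _ _) (by rwa [wordProd_singleton])).2
  rw [wordProd_singleton, List.length_singleton, pow_one] at hle
  exact pos_of_mul_pos_right ((mnorm_pos hi).trans_le hle) hC.le

lemma HasUniformGrowth.hasULE {C x : ℝ} (h : HasUniformGrowth M C x) (hC : 0 < C) :
    HasULE M :=
  hasULE_iff.2 ⟨C, hC, Real.log x, fun w hw hne => by
    rw [Real.exp_log (h.pos hC hw hne)]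
    exact h w hw hne⟩

lemma HasUniformGrowth.rho_eq_exp_mul (hM : ∀ i, M i ∈ nonnegMatrices d)
    (hA : ∀ n, (∑ i, M i) ^ n ≠ 0) {ent rho C x : ℝ}
    (hent : Tendsto (fun n : ℕ =>
        (n : ℝ)⁻¹ * Real.log (Set.ncard {f : Fin n → Fin k | wordProd M (List.ofFn f) ≠ 0}))
      atTop (𝓝 ent))
    (hrho : Tendsto (fun n : ℕ => mnorm ((∑ i, M i) ^ n) ^ ((n : ℝ))⁻¹) atTop (𝓝 rho))
    (h : HasUniformGrowth M C x) (hC : 0 < C) (hx : 0 < x) :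
    rho = Real.exp ent * x := by
  have hcard : ∀ n, (0 : ℝ) < (nonzeroWords M n).card := fun n => by
    exact_mod_cast (nonzeroWords_nonempty M (hA n)).card_pos
  have hbd : ∀ n ≠ 0, ∀ f ∈ nonzeroWords M n,
      C⁻¹ * x ^ n ≤ mnorm (wordProd M (List.ofFn f)) ∧
        mnorm (wordProd M (List.ofFn f)) ≤ C * x ^ n := fun n hn f hf => by
    simpa using h (List.ofFn f) (by simpa using hn) (by simpa [nonzeroWords] using hf)
  refine eq_mul_of_le_mul_pow hC hx (fun n => (hcard n).le) ?_ ?_ hrho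
    (tendsto_rpow_inv_of_tendsto_inv_mul_log hcard
      (by simpa only [ncard_setOf_wordProd_ne_zero] using hent))
  all_goals
    filter_upwards [eventually_ne_atTop 0] with n hn
    rw [mnorm_sum_pow_eq_sum_nonzeroWords M hM, mul_right_comm, mul_comm _ (Finset.card _ : ℝ),
      ← nsmul_eq_mul]
  · exact Finset.card_nsmul_le_sum _ _ _ fun f hf => (hbd n hn f hf).1
  · exact Finset.sum_le_card_nsmul _ _ _ fun f hf => (hbd n hn f hf).2

end Growth

theorem stmt2_general {d k : ℕ} [NeZero d]
    (M : Fin k → Matrix (Fin d) (Fin d) ℝ)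
    (hpos : PosIrred M)
    (entM rhoM : ℝ)
    (hent : Tendsto (fun n : ℕ =>
        (n : ℝ)⁻¹ * Real.log (Set.ncard {f : Fin n → Fin k | wordProd M (List.ofFn f) ≠ 0}))
      atTop (nhds entM))
    (hrho : Tendsto (fun n : ℕ => mnorm ((∑ i, M i) ^ n) ^ ((n : ℝ))⁻¹) atTop (nhds rhoM)) :
    HasULE M ↔ ∃ C : ℝ, 0 < C ∧ ∀ w : List (Fin k), w ≠ [] → wordProd M w ≠ 0 →
      C⁻¹ * (rhoM / Real.exp entM) ^ w.length ≤ mnorm (wordProd M w) ∧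
      mnorm (wordProd M w) ≤ C * (rhoM / Real.exp entM) ^ w.length := by
  obtain ⟨hM, hirr⟩ := hpos
  have hA : ∀ n, (∑ i, M i) ^ n ≠ 0 := PosIrredMat.pow_ne_zero (sum_mem fun i _ => hM i) hirr
  constructor
  · intro hULE
    obtain ⟨C, hC, lam, h⟩ := hasULE_iff.1 hULE
    have hr : rhoM / Real.exp entM = Real.exp lam := by
      rw [h.rho_eq_exp_mul hM hA hent hrho hC (Real.exp_pos lam),
        mul_div_cancel_left₀ _ (Real.exp_ne_zero _)]
    exact ⟨C, hC, hr ▸ h⟩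
  · rintro ⟨C, hC, h⟩
    exact HasUniformGrowth.hasULE h hC

theorem stmt2 {d k : ℕ} [NeZero d] [NeZero k]
    (M : Fin k → Matrix (Fin d) (Fin d) ℝ)
    (hpos : PosIrred M)
    (entM rhoM : ℝ)
    (hent : Tendsto (fun n : ℕ =>
        (n : ℝ)⁻¹ * Real.log (Set.ncard {f : Fin n → Fin k | wordProd M (List.ofFn f) ≠ 0}))
      atTop (nhds entM))
    (hrho : Tendsto (fun n : ℕ => mnorm ((∑ i, M i) ^ n) ^ ((n : ℝ))⁻¹) atTop (nhds rhoM)) :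
    HasULE M ↔ ∃ C : ℝ, 0 < C ∧ ∀ w : List (Fin k), w ≠ [] → wordProd M w ≠ 0 →
      C⁻¹ * (rhoM / Real.exp entM) ^ w.length ≤ mnorm (wordProd M w) ∧
      mnorm (wordProd M w) ≤ C * (rhoM / Real.exp entM) ^ w.length :=
  stmt2_general M hpos entM rhoM hent hrho
end

section
/- Let 𝐌=(M_1,…,M_k) be a positively irreducible tuple of nonnegative d×d matrices, and let i,j∈{1,…,d}. If (M_J)_{i,j}=0 for every word J with 1≤|J|≤d² and (M_J)_{1,1}>0, then (M_J)_{i,j}=0 for every nonempty word J with (M_J)_{1,1}>0. -/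
open Filter Real MeasureTheory

lemma wordProd_append {d k : ℕ} (M : Fin k → Matrix (Fin d) (Fin d) ℝ)
    (u v : List (Fin k)) : wordProd M (u ++ v) = wordProd M u * wordProd M v := by
  simp [wordProd]

lemma wordProd_nonneg {d k : ℕ} (M : Fin k → Matrix (Fin d) (Fin d) ℝ)
    (hM : ∀ i a b, 0 ≤ M i a b) :
    ∀ w : List (Fin k), ∀ a b, 0 ≤ wordProd M w a b := by
  intro w
  induction w with
  | nil =>
    intro a b
    by_cases hab : a = b <;> simp [wordProd, Matrix.one_apply, hab]
  | cons hd tl ih =>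
    intro a b
    have : wordProd M (hd :: tl) = M hd * wordProd M tl := by simp [wordProd]
    rw [this, Matrix.mul_apply]
    exact Finset.sum_nonneg fun c _ => mul_nonneg (hM _ _ _) (ih _ _)

lemma mul_entry_pos {d : ℕ} {A B : Matrix (Fin d) (Fin d) ℝ}
    (hA : ∀ a b, 0 ≤ A a b) (hB : ∀ a b, 0 ≤ B a b) {x y z : Fin d}
    (h1 : 0 < A x z) (h2 : 0 < B z y) : 0 < (A * B) x y := by
  rw [Matrix.mul_apply]
  exact Finset.sum_pos' (fun c _ => mul_nonneg (hA _ _) (hB _ _))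
    ⟨z, Finset.mem_univ z, mul_pos h1 h2⟩

lemma exists_of_mul_entry_pos {d : ℕ} {A B : Matrix (Fin d) (Fin d) ℝ}
    (hA : ∀ a b, 0 ≤ A a b) (hB : ∀ a b, 0 ≤ B a b) {x y : Fin d}
    (h : 0 < (A * B) x y) : ∃ z, 0 < A x z ∧ 0 < B z y := by
  by_contra hc
  push_neg at hc
  rw [Matrix.mul_apply] at h
  have hz : ∀ z ∈ Finset.univ, A x z * B z y = 0 := by
    intro z _
    rcases eq_or_lt_of_le (hA x z) with hz0 | hz0
    · rw [← hz0, zero_mul]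
    · have := le_antisymm (hc z hz0) (hB z y)
      rw [this, mul_zero]
  rw [Finset.sum_eq_zero hz] at h
  exact lt_irrefl 0 h

theorem stmt4 {d k : ℕ} [NeZero d] [NeZero k]
    (M : Fin k → Matrix (Fin d) (Fin d) ℝ)
    (hpos : PosIrred M)
    (i j : Fin d)
    (h : ∀ w : List (Fin k), 1 ≤ w.length → w.length ≤ d ^ 2 →
      0 < wordProd M w 0 0 → wordProd M w i j = 0) :
    ∀ w : List (Fin k), w ≠ [] → 0 < wordProd M w 0 0 → wordProd M w i j = 0 := by
  obtain ⟨hMnn, -⟩ := hpos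
  have hnn := wordProd_nonneg M hMnn
  suffices H : ∀ n : ℕ, ∀ w : List (Fin k), w.length = n → w ≠ [] →
      0 < wordProd M w 0 0 → wordProd M w i j = 0 by
    intro w hw hp; exact H w.length w rfl hw hp
  intro n
  induction n using Nat.strong_induction_on with
  | _ n IH =>
    intro w hlen hne hp00
    by_cases hsmall : n ≤ d ^ 2
    · refine h w ?_ (hlen ▸ hsmall) hp00
      have hl : 0 < w.length := List.length_pos_iff.mpr hne
      omega
    · push_neg at hsmall
      by_contra hc
      have hpij : 0 < wordProd M w i j := lt_of_le_of_ne (hnn w i j) (Ne.symm hc)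
      have exP : ∀ t : ℕ, ∃ p : Fin d × Fin d,
          (0 < wordProd M (w.take t) 0 p.1 ∧ 0 < wordProd M (w.drop t) p.1 0) ∧
          (0 < wordProd M (w.take t) i p.2 ∧ 0 < wordProd M (w.drop t) p.2 j) := by
        intro t
        have hsplit : wordProd M w = wordProd M (w.take t) * wordProd M (w.drop t) := by
          conv_lhs => rw [← List.take_append_drop t w]
          exact wordProd_append M _ _
        obtain ⟨a, ha1, ha2⟩ := exists_of_mul_entry_pos (hnn _) (hnn _)
          (x := (0 : Fin d)) (y := (0 : Fin d)) (hsplit ▸ hp00)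
        obtain ⟨b, hb1, hb2⟩ := exists_of_mul_entry_pos (hnn _) (hnn _)
          (x := i) (y := j) (hsplit ▸ hpij)
        exact ⟨(a, b), ⟨ha1, ha2⟩, ⟨hb1, hb2⟩⟩
      have key : ∀ t t' : ℕ, t < t' → t' < n →
          (exP t).choose = (exP t').choose → False := by
        intro t t' hlt ht'n heq
        set a := (exP t).choose.1 with ha
        set b := (exP t).choose.2 with hb
        obtain ⟨⟨hta1, -⟩, ⟨htb1, -⟩⟩ := (exP t).choose_spec
        obtain ⟨⟨-, hta2⟩, ⟨-, htb2⟩⟩ := (exP t').choose_spec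
        rw [← heq] at hta2 htb2
        set w' := w.take t ++ w.drop t' with hw'
        have hlen' : w'.length = t + (n - t') := by
          simp [hw', hlen]
          omega
        have hlt' : w'.length < n := by omega
        have hne' : w' ≠ [] := by
          intro hnil
          rw [hnil] at hlen'
          simp at hlen'
          omega
        have hp00' : 0 < wordProd M w' 0 0 := by
          rw [hw', wordProd_append]
          exact mul_entry_pos (hnn _) (hnn _) hta1 hta2
        have hpij' : 0 < wordProd M w' i j := by
          rw [hw', wordProd_append]
          exact mul_entry_pos (hnn _) (hnn _) htb1 htb2
        exact absurd (IH w'.length hlt' w' rfl hne' hp00') (ne_of_gt hpij')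
      obtain ⟨t, ht, t', ht', htne, heq⟩ :=
        Finset.exists_ne_map_eq_of_card_lt_of_maps_to
          (s := Finset.range n) (t := (Finset.univ : Finset (Fin d × Fin d)))
          (f := fun t => (exP t).choose)
          (by simp [Finset.card_univ]
              calc d * d = d ^ 2 := (sq d).symm
              _ < n := hsmall)
          (fun a _ => Finset.mem_univ _)
      rw [Finset.mem_range] at ht ht'
      rcases htne.lt_or_gt with hlt | hlt
      · exact key t t' hlt ht' heq
      · exact key t' t hlt ht heq.symm
end

section
/- Let 𝒮 be a multiplicative semigroup of nonnegative d×d matrices such that for some C>0 one has C⁻¹ ≤ ‖A‖ ≤ C for all A∈𝒮. Suppose B is a matrix in the convex hull of 𝒮 which is positively irreducible (i.e. Σ_{j=1}^ℓ B^j is entrywise positive for some ℓ≥1). Then ρ(B)=1, and if u,v∈ℝ^d are the entrywise positive right and left eigenvectors of B for the eigenvalue ρ(B)=1, normalized so that v^⊤u=1, then v^⊤Au = 1 for every A∈𝒮. -/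
open Filter Real MeasureTheory

/-!
Every matrix in the convex hull of `𝒮` is nonnegative with entry sum in `[C⁻¹, C]`, and the hull
is again a semigroup, so `‖Bⁿ‖ ∈ [C⁻¹, C]` and `ρ(B) = 1`. An average `D` of `B, …, B^ℓ` is an
entrywise positive element of the hull fixing `u` and `vᵀ`, so `Dᵏ` converges to the Perron
projection `P = u vᵀ`, which therefore lies in the closure of the hull. For `A ∈ 𝒮` we have
`P A P = (vᵀ A u) P`, so every `(vᵀ A u)ᵏ P` lies in that closure too, where `‖·‖` stays in
`[C⁻¹, C]`; this forces `vᵀ A u = 1`.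
-/

open Matrix Set Topology

section Semigroup

variable {𝕜 R : Type*} [CommSemiring 𝕜]

theorem mul_mem_convexHull [PartialOrder 𝕜] [NonUnitalNonAssocSemiring R] [Module 𝕜 R]
    [SMulCommClass 𝕜 R R] [IsScalarTower 𝕜 R R] {s : Set R}
    (hs : ∀ a ∈ s, ∀ b ∈ s, a * b ∈ s) {x y : R} (hx : x ∈ convexHull 𝕜 s)
    (hy : y ∈ convexHull 𝕜 s) : x * y ∈ convexHull 𝕜 s := by
  have hright : ∀ b ∈ s, ∀ a ∈ convexHull 𝕜 s, a * b ∈ convexHull 𝕜 s := fun b hb =>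
    convexHull_min (fun a ha => subset_convexHull 𝕜 s (hs a ha b hb))
      ((convex_convexHull 𝕜 s).linear_preimage (LinearMap.mulRight 𝕜 b))
  exact convexHull_min (fun b hb => hright b hb x hx)
    ((convex_convexHull 𝕜 s).linear_preimage (LinearMap.mulLeft 𝕜 x)) hy

theorem Subsemigroup.pow_succ_mem [Monoid R] (T : Subsemigroup R) {x : R} (hx : x ∈ T)
    (n : ℕ) : x ^ (n + 1) ∈ T := by
  induction n with
  | zero => simpa using hx
  | succ n ih => simpa [pow_succ] using T.mul_mem ih hx

theorem Subsemigroup.pow_smul_mem [Semiring R] [Algebra 𝕜 R] (T : Subsemigroup R) {p : R}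
    (hp : p ∈ T) (hpp : IsIdempotentElem p) {t : 𝕜} (ht : t • p ∈ T) (n : ℕ) :
    t ^ n • p ∈ T := by
  induction n with
  | zero => simpa using hp
  | succ n ih =>
    have h : (t ^ n • p) * (t • p) = t ^ (n + 1) • p := by
      rw [smul_mul_smul, hpp.eq, pow_succ]
    exact h ▸ T.mul_mem ih ht

end Semigroup

theorem eq_one_of_forall_pow_mul_mem_Icc {x c a b : ℝ} (ha : 0 < a)
    (h : ∀ n : ℕ, x ^ n * c ∈ Icc a b) : x = 1 := by
  have hc : 0 < c := by simpa using ha.trans_le (h 0).1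
  rcases lt_trichotomy x 1 with hx1 | hx1 | hx1
  · obtain ⟨n, hn⟩ := exists_pow_lt_of_lt_one (div_pos ha hc) hx1
    rw [lt_div_iff₀ hc] at hn
    linarith [(h n).1]
  · exact hx1
  · obtain ⟨n, hn⟩ := pow_unbounded_of_one_lt (b / c) hx1
    rw [div_lt_iff₀ hc] at hn
    linarith [(h n).2]

theorem tendsto_rpow_inv_natCast_of_mem_Icc {f : ℕ → ℝ} {a b : ℝ} (ha : 0 < a)
    (hf : ∀ᶠ n in atTop, f n ∈ Icc a b) :
    Tendsto (fun n : ℕ => f n ^ (n : ℝ)⁻¹) atTop (𝓝 1) := by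
  obtain ⟨m, hm⟩ := hf.exists
  have hb : 0 < b := ha.trans_le (hm.1.trans hm.2)
  have hconst : ∀ c : ℝ, 0 < c → Tendsto (fun n : ℕ => c ^ (n : ℝ)⁻¹) atTop (𝓝 1) :=
    fun c hc => by
      simpa using tendsto_const_nhds.rpow
        (tendsto_inv_atTop_zero.comp tendsto_natCast_atTop_atTop) (Or.inl hc.ne')
  refine tendsto_of_tendsto_of_tendsto_of_le_of_le' (hconst a ha) (hconst b hb) ?_ ?_ <;>
    filter_upwards [hf] with n hn
  · exact rpow_le_rpow ha.le hn.1 (by positivity)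
  · exact rpow_le_rpow (ha.le.trans hn.1) hn.2 (by positivity)

section Mnorm

variable {d : ℕ}

theorem continuous_mnorm : Continuous (mnorm : Matrix (Fin d) (Fin d) ℝ → ℝ) := by
  unfold mnorm
  fun_prop

theorem mnorm_smul (c : ℝ) (M : Matrix (Fin d) (Fin d) ℝ) : mnorm (c • M) = |c| * mnorm M := by
  simp [mnorm, abs_mul, Finset.mul_sum]

theorem mnorm_eq_sum_of_nonneg {M : Matrix (Fin d) (Fin d) ℝ} (hM : ∀ i j, 0 ≤ M i j) :
    mnorm M = ∑ i, ∑ j, M i j := by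
  simp only [mnorm, abs_of_nonneg (hM _ _)]

theorem mnorm_mem_Icc_of_mem_closure_convexHull {S : Set (Matrix (Fin d) (Fin d) ℝ)} {a b : ℝ}
    (hnn : ∀ A ∈ S, ∀ i j, 0 ≤ A i j) (hbd : ∀ A ∈ S, mnorm A ∈ Icc a b)
    {M : Matrix (Fin d) (Fin d) ℝ} (hM : M ∈ closure (convexHull ℝ S)) : mnorm M ∈ Icc a b := by
  -- on nonnegative matrices `mnorm` is the linear functional `entrySum`
  let entrySum : Matrix (Fin d) (Fin d) ℝ →ₗ[ℝ] ℝ := ∑ i, ∑ j, entryLinearMap ℝ ℝ i j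
  let K := (⋂ i, ⋂ j, entryLinearMap ℝ ℝ i j ⁻¹' Ici 0) ∩ entrySum ⁻¹' Icc a b
  have hK : Convex ℝ K := (convex_iInter fun i => convex_iInter fun j =>
    (convex_Ici 0).linear_preimage _).inter ((convex_Icc a b).linear_preimage _)
  have hSK : S ⊆ K := fun A hA => by
    simpa [K, entrySum, ← mnorm_eq_sum_of_nonneg (hnn A hA)] using ⟨hnn A hA, hbd A hA⟩
  have hhull : ∀ N ∈ convexHull ℝ S, mnorm N ∈ Icc a b := fun N hN => by
    have hNK := convexHull_min hSK hK hN
    simp only [K, entrySum, mem_inter_iff, mem_iInter, mem_preimage, mem_Ici,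
      entryLinearMap_apply, LinearMap.coe_sum, Finset.sum_apply] at hNK
    rw [mnorm_eq_sum_of_nonneg hNK.1]
    exact hNK.2
  exact closure_minimal hhull (isClosed_Icc.preimage continuous_mnorm) hM

end Mnorm

section PerronProjection

variable {n : Type*} [Fintype n] [DecidableEq n]

theorem tendsto_pow_nhds_zero_of_mulVec_eq_smul {N : Matrix n n ℝ} (hN : ∀ i j, 0 ≤ N i j)
    {u : n → ℝ} (hu : ∀ i, 0 < u i) {r : ℝ} (hr : r < 1) (hNu : N *ᵥ u = r • u) :
    Tendsto (fun k : ℕ => N ^ k) atTop (𝓝 0) := by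
  have hpow_nonneg : ∀ k i j, 0 ≤ (N ^ k) i j := by
    intro k
    induction k with
    | zero => intro i j; rw [pow_zero, one_apply]; split_ifs <;> norm_num
    | succ k ih =>
      intro i j
      rw [pow_succ, mul_apply]
      exact Finset.sum_nonneg fun l _ => mul_nonneg (ih i l) (hN l j)
  have hpow_u : ∀ k : ℕ, N ^ k *ᵥ u = r ^ k • u := by
    intro k
    induction k with
    | zero => simp
    | succ k ih => rw [pow_succ', ← mulVec_mulVec, ih, mulVec_smul, hNu, smul_smul, ← pow_succ]
  refine tendsto_pi_nhds.2 fun i => tendsto_pi_nhds.2 fun j => ?_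
  have hr0 : 0 ≤ r := by
    have h : r * u i = ∑ l, N i l * u l := by
      simpa [mulVec, dotProduct] using (congrFun hNu i).symm
    exact nonneg_of_mul_nonneg_left
      (h ▸ Finset.sum_nonneg fun l _ => mul_nonneg (hN i l) (hu l).le) (hu i)
  have hbound : ∀ k : ℕ, (N ^ k) i j ≤ r ^ k * u i / u j := fun k => by
    rw [le_div_iff₀ (hu j)]
    calc (N ^ k) i j * u j ≤ ∑ l, (N ^ k) i l * u l :=
          Finset.single_le_sum (fun l _ => mul_nonneg (hpow_nonneg k i l) (hu l).le)
            (Finset.mem_univ j)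
      _ = r ^ k * u i := by simpa [mulVec, dotProduct] using congrFun (hpow_u k) i
  have hlim : Tendsto (fun k : ℕ => r ^ k * u i / u j) atTop (𝓝 0) := by
    simpa using ((tendsto_pow_atTop_nhds_zero_of_lt_one hr0 hr).mul_const (u i)).div_const (u j)
  exact squeeze_zero (fun k => hpow_nonneg k i j) hbound hlim

theorem tendsto_pow_nhds_vecMulVec {D : Matrix n n ℝ} (hD : ∀ i j, 0 < D i j) {u v : n → ℝ}
    (hu : ∀ i, 0 < u i) (hDu : D *ᵥ u = u) (hvD : v ᵥ* D = v) (hvu : v ⬝ᵥ u = 1) :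
    Tendsto (fun k : ℕ => D ^ k) atTop (𝓝 (vecMulVec u v)) := by
  set P := vecMulVec u v
  have hDP : D * P = P := by rw [mul_vecMulVec, hDu]
  have hPD : P * D = P := by rw [vecMulVec_mul, hvD]
  have hPP : P * P = P := by rw [vecMulVec_mul_vecMulVec, hvu, one_smul]
  -- split `D = N + δ P` with `N ≥ 0`; then `N u = (1 - δ) u` and `Dᵏ = P + Nᵏ (1 - P)`
  obtain ⟨δ, hδD, hδ⟩ : ∃ δ : ℝ, (∀ i j, δ * (u i * v j) < D i j) ∧ 0 < δ := by
    have h : ∀ᶠ δ in 𝓝 (0 : ℝ), ∀ i j, δ * (u i * v j) < D i j := by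
      simp only [eventually_all]
      intro i j
      exact ((continuous_mul_const (u i * v j)).tendsto' 0 0 (zero_mul _)).eventually_lt_const
        (hD i j)
    exact ((h.filter_mono (nhdsWithin_le_nhds (s := Ioi 0))).and self_mem_nhdsWithin).exists
  set N := D - δ • P
  have hN : ∀ i j, 0 ≤ N i j := fun i j => by
    simpa [N, P, vecMulVec_apply] using (hδD i j).le
  have hNu : N *ᵥ u = (1 - δ) • u := by
    simp [N, P, sub_mulVec, smul_mulVec, vecMulVec_mulVec, hvu, hDu, sub_smul]
  have hpow : ∀ k : ℕ, D ^ k = P + N ^ k * (1 - P) := by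
    have hstep : (1 - P) * D = N * (1 - P) := by
      simp only [N, sub_mul, mul_sub, one_mul, mul_one, hPD, hDP, smul_mul_assoc, hPP]
      abel
    intro k
    induction k with
    | zero => simp
    | succ k ih => rw [pow_succ, ih, add_mul, hPD, mul_assoc, hstep, ← mul_assoc, ← pow_succ]
  have hN0 := tendsto_pow_nhds_zero_of_mulVec_eq_smul hN hu (by linarith) hNu
  simpa [hpow] using tendsto_const_nhds.add (hN0.mul_const (1 - P))

theorem mulVec_eq_of_mem_convexHull_pow {B : Matrix n n ℝ} {u : n → ℝ} (hBu : B *ᵥ u = u)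
    {D : Matrix n n ℝ} (hD : D ∈ convexHull ℝ (range fun k : ℕ => B ^ (k + 1))) :
    D *ᵥ u = u := by
  refine convexHull_min (t := {X | X *ᵥ u = u}) ?_ ?_ hD
  · rintro _ ⟨k, rfl⟩
    show B ^ (k + 1) *ᵥ u = u
    induction k with
    | zero => simpa using hBu
    | succ k ih => rw [pow_succ, ← mulVec_mulVec, hBu, ih]
  · intro X (hX : X *ᵥ u = u) Y (hY : Y *ᵥ u = u) a b _ _ hab
    show (a • X + b • Y) *ᵥ u = u
    rw [add_mulVec, smul_mulVec, smul_mulVec, hX, hY, ← add_smul, hab, one_smul]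

theorem vecMul_eq_of_mem_convexHull_pow {B : Matrix n n ℝ} {v : n → ℝ} (hvB : v ᵥ* B = v)
    {D : Matrix n n ℝ} (hD : D ∈ convexHull ℝ (range fun k : ℕ => B ^ (k + 1))) :
    v ᵥ* D = v := by
  refine convexHull_min (t := {X | v ᵥ* X = v}) ?_ ?_ hD
  · rintro _ ⟨k, rfl⟩
    show v ᵥ* B ^ (k + 1) = v
    induction k with
    | zero => simpa using hvB
    | succ k ih => rw [pow_succ', ← vecMul_vecMul, hvB, ih]
  · intro X (hX : v ᵥ* X = v) Y (hY : v ᵥ* Y = v) a b _ _ hab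
    show v ᵥ* (a • X + b • Y) = v
    rw [vecMul_add, vecMul_smul, vecMul_smul, hX, hY, ← add_smul, hab, one_smul]

end PerronProjection

theorem PosIrredMat.exists_pos_mem_convexHull_pow {d : ℕ} {B : Matrix (Fin d) (Fin d) ℝ}
    (hB : PosIrredMat B) :
    ∃ D ∈ convexHull ℝ (range fun k : ℕ => B ^ (k + 1)), ∀ i j, 0 < D i j := by
  obtain ⟨ℓ, hℓ, hpos⟩ := hB
  have hℓ₀ : (0 : ℝ) < ℓ := by exact_mod_cast hℓ
  refine ⟨∑ j ∈ Finset.Icc 1 ℓ, (ℓ : ℝ)⁻¹ • B ^ j, ?_, fun a b => ?_⟩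
  · refine (convex_convexHull ℝ _).sum_mem (fun _ _ => by positivity) ?_ fun j hj => ?_
    · simp [Nat.card_Icc, hℓ₀.ne']
    · refine subset_convexHull ℝ _ ⟨j - 1, ?_⟩
      show B ^ (j - 1 + 1) = B ^ j
      rw [Nat.sub_add_cancel (Finset.mem_Icc.1 hj).1]
  · simpa [← Finset.smul_sum, hℓ₀] using hpos a b

theorem vecMulVec_mul_mul_vecMulVec {n : Type*} [Fintype n] (u v : n → ℝ) (A : Matrix n n ℝ) :
    vecMulVec u v * A * vecMulVec u v = (v ⬝ᵥ A *ᵥ u) • vecMulVec u v := by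
  rw [vecMulVec_mul, vecMulVec_mul_vecMulVec, vecMulVec_smul, dotProduct_mulVec]

theorem abs_dotProduct_mulVec_eq_one {d : ℕ} (G : Subsemigroup (Matrix (Fin d) (Fin d) ℝ))
    {a b : ℝ} (ha : 0 < a) (hG : ∀ M ∈ G, mnorm M ∈ Icc a b) {u v : Fin d → ℝ}
    (hvu : v ⬝ᵥ u = 1) (hP : vecMulVec u v ∈ G) {A : Matrix (Fin d) (Fin d) ℝ} (hA : A ∈ G) :
    |v ⬝ᵥ A *ᵥ u| = 1 := by
  have htP : (v ⬝ᵥ A *ᵥ u) • vecMulVec u v ∈ G :=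
    vecMulVec_mul_mul_vecMulVec u v A ▸ G.mul_mem (G.mul_mem hP hA) hP
  have hidem : IsIdempotentElem (vecMulVec u v) := by
    rw [IsIdempotentElem, vecMulVec_mul_vecMulVec, hvu, one_smul]
  refine eq_one_of_forall_pow_mul_mem_Icc (c := mnorm (vecMulVec u v)) (b := b) ha fun k => ?_
  simpa [mnorm_smul, abs_pow] using hG _ (G.pow_smul_mem hP hidem htP k)

theorem stmt8 {d : ℕ} (S : Set (Matrix (Fin d) (Fin d) ℝ))
    (hmul : ∀ A ∈ S, ∀ B ∈ S, A * B ∈ S)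
    (hnn : ∀ A ∈ S, ∀ i j, 0 ≤ A i j)
    (C : ℝ) (hC : 0 < C)
    (hbd : ∀ A ∈ S, C⁻¹ ≤ mnorm A ∧ mnorm A ≤ C)
    (B : Matrix (Fin d) (Fin d) ℝ)
    (hB : B ∈ convexHull ℝ S)
    (hirr : PosIrredMat B)
    (rB : ℝ)
    (hrB : Tendsto (fun n : ℕ => mnorm (B ^ n) ^ ((n : ℝ))⁻¹) atTop (nhds rB)) :
    rB = 1 ∧ ∀ u v : Fin d → ℝ, (∀ i, 0 < u i) → (∀ i, 0 < v i) →
      B.mulVec u = rB • u → Matrix.vecMul v B = rB • v →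
      dotProduct v u = 1 →
      ∀ A ∈ S, dotProduct v (A.mulVec u) = 1 := by
  let H : Subsemigroup (Matrix (Fin d) (Fin d) ℝ) :=
    { carrier := convexHull ℝ S, mul_mem' := mul_mem_convexHull hmul }
  have hnorm : ∀ M ∈ H.topologicalClosure, mnorm M ∈ Icc C⁻¹ C :=
    fun M hM => mnorm_mem_Icc_of_mem_closure_convexHull hnn hbd hM
  have hBpow : ∀ k : ℕ, B ^ (k + 1) ∈ H := H.pow_succ_mem hB
  obtain rfl : rB = 1 := tendsto_nhds_unique hrB <| tendsto_rpow_inv_natCast_of_mem_Icc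
    (inv_pos.2 hC) <| eventually_atTop.2 ⟨1, fun k hk => hnorm _ <| H.le_topologicalClosure <|
      Nat.sub_add_cancel hk ▸ hBpow (k - 1)⟩
  refine ⟨rfl, fun u v hu hv hBu hvB hvu A hA => ?_⟩
  rw [one_smul] at hBu hvB
  obtain ⟨D, hDB, hDpos⟩ := hirr.exists_pos_mem_convexHull_pow
  have hDH : D ∈ H := convexHull_min (range_subset_iff.2 hBpow) (convex_convexHull ℝ S) hDB
  have hlim := (tendsto_pow_nhds_vecMulVec hDpos hu (mulVec_eq_of_mem_convexHull_pow hBu hDB)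
    (vecMul_eq_of_mem_convexHull_pow hvB hDB) hvu).comp (tendsto_add_atTop_nat 1)
  have hP : vecMulVec u v ∈ H.topologicalClosure :=
    mem_closure_of_tendsto hlim (.of_forall (H.pow_succ_mem hDH))
  have ht : 0 ≤ v ⬝ᵥ A *ᵥ u := by
    simp only [dotProduct, mulVec]
    exact Finset.sum_nonneg fun i _ =>
      mul_nonneg (hv i).le (Finset.sum_nonneg fun j _ => mul_nonneg (hnn A hA i j) (hu j).le)
  rw [← abs_of_nonneg ht]
  exact abs_dotProduct_mulVec_eq_one _ (inv_pos.2 hC) hnorm hvu hP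
    (H.le_topologicalClosure (subset_convexHull ℝ S hA))
end

section
/- Let A_1,…,A_k be nonnegative n×n matrices with ρ(A_1+⋯+A_k) ≤ k, and define (n+1)×(n+1) matrices M_i = [[1,0],[0,A_i]] (block diagonal, with the scalar 1 in the upper-left corner and A_i as the lower-right block). Then the tuple 𝐌=(M_1,…,M_k) has a uniform Lyapunov exponent modulo 0 if and only if there exists C>0 such that ‖A_{i_1}⋯A_{i_n}‖ ≤ C for every n≥1 and every i_1,…,i_n∈{1,…,k}. -/
open Filter Real MeasureTheory

namespace S18

noncomputable def blk {n : ℕ} (X : Matrix (Fin n) (Fin n) ℝ) :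
    Matrix (Fin (n+1)) (Fin (n+1)) ℝ :=
  Matrix.of (Fin.cases (Fin.cases 1 fun _ => 0) (fun a' => Fin.cases 0 fun b' => X a' b'))

variable {n k : ℕ}

section blk
variable (X Y : Matrix (Fin n) (Fin n) ℝ)

@[simp] lemma blk_zz : blk X 0 0 = 1 := rfl
@[simp] lemma blk_zs (b : Fin n) : blk X 0 b.succ = 0 := by simp [blk]
@[simp] lemma blk_sz (a : Fin n) : blk X a.succ 0 = 0 := by simp [blk]
@[simp] lemma blk_ss (a b : Fin n) : blk X a.succ b.succ = X a b := by simp [blk]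

lemma blk_one : blk (1 : Matrix (Fin n) (Fin n) ℝ) = 1 := by
  ext a b
  refine Fin.cases ?_ (fun a' => ?_) a <;> refine Fin.cases ?_ (fun b' => ?_) b <;>
    simp [Matrix.one_apply, Fin.succ_ne_zero, (Fin.succ_ne_zero _).symm]

lemma blk_mul : blk X * blk Y = blk (X * Y) := by
  ext a b
  refine Fin.cases ?_ (fun a' => ?_) a <;> refine Fin.cases ?_ (fun b' => ?_) b <;>
    simp [Matrix.mul_apply, Fin.sum_univ_succ]

lemma mnorm_blk : mnorm (blk X) = 1 + mnorm X := by
  simp [mnorm, Fin.sum_univ_succ]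

end blk

lemma mnorm_nonneg {d : ℕ} (Z : Matrix (Fin d) (Fin d) ℝ) : 0 ≤ mnorm Z :=
  Finset.sum_nonneg fun _ _ => Finset.sum_nonneg fun _ _ => abs_nonneg _

lemma wordProd_nil {d : ℕ} (M : Fin k → Matrix (Fin d) (Fin d) ℝ) :
    wordProd M [] = 1 := rfl

lemma wordProd_cons {d : ℕ} (M : Fin k → Matrix (Fin d) (Fin d) ℝ) (i : Fin k)
    (w : List (Fin k)) : wordProd M (i :: w) = M i * wordProd M w := by
  simp [wordProd]

lemma wordProd_nonneg (A : Fin k → Matrix (Fin n) (Fin n) ℝ)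
    (hnn : ∀ i a b, 0 ≤ A i a b) (w : List (Fin k)) :
    ∀ a b, 0 ≤ wordProd A w a b := by
  induction w with
  | nil => intro a b; rw [wordProd_nil]; simp [Matrix.one_apply]; positivity
  | cons i w ih =>
      intro a b
      rw [wordProd_cons, Matrix.mul_apply]
      exact Finset.sum_nonneg fun c _ => mul_nonneg (hnn i a c) (ih c b)

lemma pow_eq_sum (A : Fin k → Matrix (Fin n) (Fin n) ℝ) (m : ℕ) :
    (∑ i, A i) ^ m = ∑ f : Fin m → Fin k, wordProd A (List.ofFn f) := by
  induction m with
  | zero => simp [wordProd_nil]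
  | succ m ih =>
      rw [pow_succ', ih, Finset.mul_sum]
      simp only [Finset.sum_mul]
      rw [show (∑ f : Fin (m+1) → Fin k, wordProd A (List.ofFn f))
          = ∑ p : Fin k × (Fin m → Fin k), wordProd A (List.ofFn (Fin.cons p.1 p.2)) from
        (Fintype.sum_equiv (Fin.consEquiv (fun _ => Fin k))
          (fun p => wordProd A (List.ofFn (Fin.cons p.1 p.2)))
          (fun f => wordProd A (List.ofFn f)) (fun p => rfl)).symm]
      rw [Fintype.sum_prod_type]
      conv_lhs => rw [Finset.sum_comm]
      refine Finset.sum_congr rfl fun i _ => Finset.sum_congr rfl fun g _ => ?_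
      have hofn : List.ofFn (Fin.cons i g : Fin (m+1) → Fin k) = i :: List.ofFn g := by
        simp [List.ofFn_succ]
      rw [hofn, wordProd_cons]

lemma mnorm_sum_pow (A : Fin k → Matrix (Fin n) (Fin n) ℝ)
    (hnn : ∀ i a b, 0 ≤ A i a b) (m : ℕ) :
    mnorm ((∑ i, A i) ^ m) = ∑ f : Fin m → Fin k, mnorm (wordProd A (List.ofFn f)) := by
  rw [pow_eq_sum]
  unfold mnorm
  have h1 : ∀ a b : Fin n, |(∑ f : Fin m → Fin k, wordProd A (List.ofFn f)) a b|
      = ∑ f : Fin m → Fin k, |wordProd A (List.ofFn f) a b| := by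
    intro a b
    rw [Matrix.sum_apply,
      abs_of_nonneg (Finset.sum_nonneg fun f _ => wordProd_nonneg A hnn _ a b)]
    exact Finset.sum_congr rfl fun f _ => (abs_of_nonneg (wordProd_nonneg A hnn _ a b)).symm
  simp only [h1]
  exact (Finset.sum_congr rfl fun a _ => Finset.sum_comm).trans Finset.sum_comm

end S18

theorem stmt18 {n k : ℕ} [NeZero k]
    (A : Fin k → Matrix (Fin n) (Fin n) ℝ)
    (hnn : ∀ i a b, 0 ≤ A i a b)
    (rA : ℝ)
    (hrA : Tendsto (fun nn : ℕ => mnorm ((∑ i, A i) ^ nn) ^ ((nn : ℝ))⁻¹) atTop (nhds rA))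
    (hle : rA ≤ k)
    (M : Fin k → Matrix (Fin (n + 1)) (Fin (n + 1)) ℝ)
    (hM : ∀ i, M i 0 0 = 1 ∧
      (∀ b : Fin n, M i 0 b.succ = 0 ∧ M i b.succ 0 = 0) ∧
      ∀ a b : Fin n, M i a.succ b.succ = A i a b) :
    HasULE M ↔ ∃ C : ℝ, 0 < C ∧ ∀ w : List (Fin k), w ≠ [] → mnorm (wordProd A w) ≤ C := by
  have hMb : ∀ i, M i = S18.blk (A i) := by
    intro i
    obtain ⟨h00, h0s, hss⟩ := hM i
    ext a b
    refine Fin.cases ?_ (fun a' => ?_) a <;> refine Fin.cases ?_ (fun b' => ?_) b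
    · simpa using h00
    · simpa using (h0s b').1
    · simpa using (h0s a').2
    · simpa using hss a' b'
  have hWP : ∀ w, wordProd M w = S18.blk (wordProd A w) := by
    intro w
    induction w with
    | nil => rw [S18.wordProd_nil, S18.wordProd_nil, S18.blk_one]
    | cons i w ih => rw [S18.wordProd_cons, S18.wordProd_cons, hMb, ih, S18.blk_mul]
  have hnorm : ∀ w, mnorm (wordProd M w) = 1 + mnorm (wordProd A w) := fun w => by
    rw [hWP, S18.mnorm_blk]
  have hne : ∀ w, wordProd M w ≠ 0 := by
    intro w h
    have h1 : (wordProd M w) 0 0 = 1 := by rw [hWP]; rfl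
    rw [h] at h1
    simp at h1
  constructor
  · rintro ⟨C, hC, lam, hULE⟩
    have hk1 : (1:ℝ) ≤ k := by exact_mod_cast Nat.one_le_iff_ne_zero.mpr (NeZero.ne k)
    have hkpos : (0:ℝ) < k := lt_of_lt_of_le one_pos hk1
    -- lower bound on mnorm ((∑ A)^m)
    have hlow : ∀ m : ℕ, 1 ≤ m →
        (k:ℝ)^m * (C⁻¹ * Real.exp (lam * m) - 1) ≤ mnorm ((∑ i, A i)^m) := by
      intro m hm
      rw [S18.mnorm_sum_pow A hnn m]
      have hbd : ∀ f : Fin m → Fin k,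
          C⁻¹ * Real.exp (lam * m) - 1 ≤ mnorm (wordProd A (List.ofFn f)) := by
        intro f
        have hw : (List.ofFn f) ≠ [] := by
          intro h
          have := congrArg List.length h
          simp at this
          omega
        rcases hULE (List.ofFn f) hw with h | ⟨h1, _⟩
        · exact absurd h (hne _)
        · rw [hnorm, List.length_ofFn] at h1; linarith
      calc (k:ℝ)^m * (C⁻¹ * Real.exp (lam*m) - 1)
          = ∑ _f : Fin m → Fin k, (C⁻¹ * Real.exp (lam*m) - 1) := by
            rw [Finset.sum_const, nsmul_eq_mul]
            congr 1
            simp [Fintype.card_fun]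
        _ ≤ ∑ f : Fin m → Fin k, mnorm (wordProd A (List.ofFn f)) :=
            Finset.sum_le_sum fun f _ => hbd f
    have hlam : lam ≤ 0 := by
      by_contra hpos
      push_neg at hpos
      have hE1 : ∀ᶠ m : ℕ in atTop,
          mnorm ((∑ i, A i)^m) ^ ((m:ℝ))⁻¹ < (k:ℝ) * Real.exp (lam/2) := by
        refine hrA.eventually_lt_const ?_
        have h1 : (1:ℝ) < Real.exp (lam/2) := by
          rw [Real.one_lt_exp_iff]; linarith
        nlinarith
      have hE2 : ∀ᶠ m : ℕ in atTop, 2*C ≤ Real.exp ((m:ℝ) * (lam/2)) := by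
        have ht : Tendsto (fun m : ℕ => Real.exp ((m:ℝ) * (lam/2))) atTop atTop :=
          Real.tendsto_exp_atTop.comp
            (tendsto_natCast_atTop_atTop.atTop_mul_const' (by linarith))
        exact ht.eventually_ge_atTop _
      obtain ⟨m, hm⟩ := ((hE1.and hE2).and (eventually_ge_atTop 1)).exists
      obtain ⟨⟨hm1, hm2⟩, hm3⟩ := hm
      -- from hm1 : mnorm(S^m)^(1/m) < k * exp(lam/2) get mnorm(S^m) < (k*exp(lam/2))^m
      have hx0 : 0 ≤ mnorm ((∑ i, A i)^m) := S18.mnorm_nonneg _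
      have hmne : m ≠ 0 := by omega
      have hpow : mnorm ((∑ i, A i)^m) < ((k:ℝ) * Real.exp (lam/2))^m := by
        have := pow_lt_pow_left₀ hm1 (Real.rpow_nonneg hx0 _) hmne
        rwa [Real.rpow_inv_natCast_pow hx0 hmne] at this
      have hype : ((k:ℝ) * Real.exp (lam/2))^m
          = (k:ℝ)^m * Real.exp ((m:ℝ) * (lam/2)) := by
        rw [mul_pow, Real.exp_nat_mul]
      rw [hype] at hpow
      have hcomb := lt_of_le_of_lt (hlow m hm3) hpow
      have hkm : (0:ℝ) < (k:ℝ)^m := pow_pos hkpos m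
      have hq : C⁻¹ * Real.exp (lam * m) - 1 < Real.exp ((m:ℝ) * (lam/2)) :=
        lt_of_mul_lt_mul_left (by linarith [hcomb]) (le_of_lt hkm)
      set t := Real.exp ((m:ℝ) * (lam/2)) with ht
      have hexpsq : Real.exp (lam * m) = t * t := by
        rw [ht, ← Real.exp_add]
        congr 1
        ring
      rw [hexpsq] at hq
      have ht1 : (1:ℝ) ≤ t := by
        rw [ht]
        refine Real.one_le_exp ?_
        have : (1:ℝ) ≤ (m:ℝ) := by exact_mod_cast hm3
        nlinarith
      have hCinv : C⁻¹ * C = 1 := inv_mul_cancel₀ (ne_of_gt hC)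
      -- hq : C⁻¹ * (t*t) - 1 < t ; hm2 : 2*C ≤ t ; contradiction
      nlinarith [mul_pos hC hC, sq_nonneg (t - 2*C)]
    refine ⟨C, hC, fun w hw => ?_⟩
    rcases hULE w hw with h | ⟨_, h2⟩
    · exact absurd h (hne w)
    · rw [hnorm] at h2
      have hexp : Real.exp (lam * w.length) ≤ 1 := by
        apply Real.exp_le_one_iff.mpr
        exact mul_nonpos_of_nonpos_of_nonneg hlam (by positivity)
      nlinarith
  · rintro ⟨C, hC, hbd⟩
    refine ⟨C + 1, by linarith, 0, fun w hw => Or.inr ?_⟩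
    rw [hnorm, zero_mul, Real.exp_zero, mul_one, mul_one]
    constructor
    · have h1 : (C+1)⁻¹ ≤ 1 := by
        rw [inv_le_one_iff₀]; right; linarith
      have h2 := S18.mnorm_nonneg (wordProd A w)
      linarith
    · have := hbd w hw; linarith
end
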